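/- arXiv:1206.2456 — 3 statements merged into one kernel-verified Lean document; each statement's English description precedes it below -/
import Mathlib

section
/- Let f(x) = x^2 - c with c a complex number. If c is not real or c is real with c < 2, then the complex number β = √(-(1/2)√(4c+1) - 1/2 + c) (for a suitable choice of square roots) is a preperiodic point of f that is not real. -/
theorem stmt_2 (c : ℂ) (hc : c.im ≠ 0 ∨ (c.im = 0 ∧ c.re < 2))
    (f : ℂ → ℂ) (hf : ∀ x, f x = x ^ 2 - c) :
    ∃ s β : ℂ, s ^ 2 = 4 * c + 1 ∧ β ^ 2 = -(1 / 2) * s - 1 / 2 + c ∧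
      β.im ≠ 0 ∧ ∃ m n : ℕ, m < n ∧ f^[m] β = f^[n] β := by
  obtain ⟨s, hs⟩ : ∃ s : ℂ, s ^ 2 = 4 * c + 1 :=
    IsAlgClosed.exists_pow_nat_eq _ two_pos
  have key : ∃ s' : ℂ, s' ^ 2 = 4 * c + 1 ∧
      ¬((c - (s' + 1) / 2).im = 0 ∧ 0 ≤ (c - (s' + 1) / 2).re) := by
    by_cases hbad : (c - (s + 1) / 2).im = 0 ∧ 0 ≤ (c - (s + 1) / 2).re
    · refine ⟨-s, by rw [neg_pow]; simp [hs], ?_⟩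
      obtain ⟨him, hre⟩ := hbad
      simp only [Complex.sub_im, Complex.sub_re, Complex.div_ofNat_im,
        Complex.div_ofNat_re, Complex.add_im, Complex.add_re, Complex.neg_im,
        Complex.neg_re, Complex.one_im, Complex.one_re] at him hre ⊢
      rintro ⟨him', hre'⟩
      rcases hc with hci | ⟨hci, hcr⟩
      · apply hci; linarith
      · -- c real case
        have hsim : s.im = 0 := by linarith
        have hsre : s.re ^ 2 = 4 * c.re + 1 := by
          have := congrArg Complex.re hs
          simp [pow_two, Complex.mul_re, hsim, Complex.mul_im, hci] at this
          linarith [this]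
        nlinarith [hre, hre', hsre, hcr]
    · exact ⟨s, hs, hbad⟩
  obtain ⟨s', hs', hw⟩ := key
  obtain ⟨β, hβ⟩ : ∃ β : ℂ, β ^ 2 = c - (s' + 1) / 2 :=
    IsAlgClosed.exists_pow_nat_eq _ two_pos
  have hβim : β.im ≠ 0 := by
    intro h
    apply hw
    constructor
    · rw [← hβ]; simp [pow_two, Complex.mul_im, h]
    · rw [← hβ]; simp [pow_two, Complex.mul_re, h]; nlinarith [mul_self_nonneg β.re]
  refine ⟨s', β, hs', by linear_combination hβ, hβim, 2, 3, by norm_num, ?_⟩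
  have hfβ : f β = -(s' + 1) / 2 := by rw [hf]; linear_combination hβ
  have h2 : f (f β) = (s' + 1) / 2 := by
    rw [hfβ, hf]; linear_combination (1 / 4 : ℂ) * hs'
  have h3 : f ((s' + 1) / 2) = (s' + 1) / 2 := by
    rw [hf]; linear_combination (1 / 4 : ℂ) * hs'
  simp [Function.iterate_succ_apply', h2, h3]
end

section
/- Let f ∈ ℂ(x) be a rational function, written as f = p/q with p, q complex polynomials, q ≠ 0, p monic, and p, q coprime. If f maps infinitely many real numbers to real numbers (i.e. the set {x ∈ ℝ : q(x) ≠ 0 and p(x)/q(x) ∈ ℝ} is infinite), then all coefficients of p and q are real. -/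
open Polynomial

private lemma real_of_conj_fixed (r : Polynomial ℂ) (h : r.map (starRingEnd ℂ) = r) :
    ∃ R : Polynomial ℝ, r = R.map (algebraMap ℝ ℂ) := by
  have : r ∈ Polynomial.lifts (algebraMap ℝ ℂ) := by
    rw [Polynomial.lifts_iff_coeff_lifts]
    intro n
    have hc : (starRingEnd ℂ) (r.coeff n) = r.coeff n := by
      conv_rhs => rw [← h]
      rw [Polynomial.coeff_map]
    refine ⟨(r.coeff n).re, ?_⟩
    have := Complex.conj_eq_iff_re.mp hc
    simpa using this
  obtain ⟨R, hR⟩ := (Polynomial.mem_lifts _).mp this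
  exact ⟨R, hR.symm⟩

theorem stmt_3 (p q : Polynomial ℂ) (hq : q ≠ 0) (hp : p.Monic) (hpq : IsCoprime p q)
    (hinf : {x : ℝ | q.eval (x : ℂ) ≠ 0 ∧
      (p.eval (x : ℂ) / q.eval (x : ℂ)).im = 0}.Infinite) :
    (∃ P : Polynomial ℝ, p = P.map (algebraMap ℝ ℂ)) ∧
    (∃ Q : Polynomial ℝ, q = Q.map (algebraMap ℝ ℂ)) := by
  set c : ℂ →+* ℂ := starRingEnd ℂ
  set pc := p.map c with hpc
  set qc := q.map c with hqc
  -- key identity: p * qc = pc * q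
  have key : p * qc = pc * q := by
    have hroots : {z : ℂ | (p * qc - pc * q).IsRoot z}.Infinite := by
      apply Set.Infinite.mono (s := (fun x : ℝ => (x : ℂ)) ''
        {x : ℝ | q.eval (x : ℂ) ≠ 0 ∧ (p.eval (x : ℂ) / q.eval (x : ℂ)).im = 0})
      · rintro z ⟨x, ⟨hx1, hx2⟩, rfl⟩
        have hconjx : c (x : ℂ) = (x : ℂ) := Complex.conj_ofReal x
        have hpev : pc.eval (x : ℂ) = c (p.eval (x : ℂ)) := by
          rw [hpc, Polynomial.eval_map, ← hconjx, Polynomial.eval₂_at_apply, hconjx]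
        have hqev : qc.eval (x : ℂ) = c (q.eval (x : ℂ)) := by
          rw [hqc, Polynomial.eval_map, ← hconjx, Polynomial.eval₂_at_apply, hconjx]
        have hreal : c (p.eval (x : ℂ) / q.eval (x : ℂ)) = p.eval (x : ℂ) / q.eval (x : ℂ) :=
          Complex.conj_eq_iff_im.mpr hx2
        have hqc0 : c (q.eval (x : ℂ)) ≠ 0 := by
          simpa using hx1
        simp only [Set.mem_setOf_eq, Polynomial.IsRoot, Polynomial.eval_sub, Polynomial.eval_mul, hpev, hqev,
          sub_eq_zero]
        rw [map_div₀] at hreal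
        field_simp at hreal
        linear_combination -hreal
      · exact Set.Infinite.image (fun a _ b _ hab => by exact_mod_cast hab) hinf
    have := Polynomial.eq_zero_of_infinite_isRoot _ hroots
    exact sub_eq_zero.mp this
  have hpcmonic : pc.Monic := hp.map c
  have hdvd : p ∣ pc := hpq.dvd_of_dvd_mul_right ⟨qc, key.symm⟩
  have hdeg : pc.natDegree ≤ p.natDegree := (hp.natDegree_map c).le
  have hppc : p = pc :=
    Polynomial.eq_of_dvd_of_natDegree_le_of_leadingCoeff hdvd hdeg
      (by rw [hp.leadingCoeff, hpcmonic.leadingCoeff])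
  have hqqc : q = qc := by
    have := key
    rw [← hppc] at this
    exact (mul_left_cancel₀ hp.ne_zero this.symm)
  exact ⟨real_of_conj_fixed p hppc.symm, real_of_conj_fixed q hqqc.symm⟩
end

section
/- Let c ≥ 2 be rational and f(x) = x² - c. Every point of f^{-n}(ε) for ε ∈ (-c, c) ∩ ℚ is a totally real algebraic number: all roots in ℂ of the polynomial f^n(X) - ε (an iterated composition, with rational coefficients) are real. -/
open Polynomial

lemma aux_eval (c : ℚ) (n : ℕ) (z : ℂ) :
    Polynomial.aeval z ((fun p => (X ^ 2 - C c : Polynomial ℚ).comp p)^[n] X)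
      = (fun w : ℂ => w ^ 2 - (c : ℂ))^[n] z := by
  induction n with
  | zero => simp
  | succ n ih =>
      rw [Function.iterate_succ_apply', Function.iterate_succ_apply']
      simp only [aeval_comp, map_sub, map_pow, aeval_X, aeval_C, ih, eq_ratCast (algebraMap ℚ ℂ)]

lemma step_real (c : ℚ) (hc : 2 ≤ c) (z : ℂ)
    (him : (z ^ 2 - (c : ℂ)).im = 0)
    (h1 : -(c : ℝ) ≤ (z ^ 2 - (c : ℂ)).re) (h2 : (z ^ 2 - (c : ℂ)).re ≤ (c : ℝ)) :
    z.im = 0 ∧ -(c : ℝ) ≤ z.re ∧ z.re ≤ (c : ℝ) := by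
  have hc' : (2 : ℝ) ≤ (c : ℝ) := by exact_mod_cast hc
  simp [Complex.sub_im, Complex.sub_re, pow_two, Complex.mul_im, Complex.mul_re] at him h1 h2
  have hprod : 2 * z.re * z.im = 0 := by linarith
  rcases mul_eq_zero.mp hprod with h | h
  · have hre : z.re = 0 := by
      rcases mul_eq_zero.mp h with h' | h'
      · linarith
      · exact h'
    have him0 : z.im = 0 := by nlinarith [sq_nonneg z.im]
    refine ⟨him0, ?_, ?_⟩ <;> rw [hre] <;> linarith
  · refine ⟨h, ?_, ?_⟩ <;> nlinarith [sq_nonneg z.im, sq_nonneg (z.re - c), sq_nonneg (z.re + c)]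

open Polynomial in
theorem stmt_15 (c ε : ℚ) (hc : 2 ≤ c) (hε₁ : -c < ε) (hε₂ : ε < c) (n : ℕ)
    (F : Polynomial ℚ) (hF : F = X ^ 2 - C c) :
    ∀ z : ℂ, Polynomial.aeval z ((fun p => F.comp p)^[n] X - C ε) = 0 →
      z.im = 0 ∧ -(c : ℝ) ≤ z.re ∧ z.re ≤ (c : ℝ) := by
  subst hF
  intro z hz
  rw [map_sub, aux_eval, aeval_C, sub_eq_zero, eq_ratCast (algebraMap ℚ ℂ)] at hz
  -- now (fun w => w^2 - c)^[n] z = ε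
  have key : ∀ m (w : ℂ),
      ((fun w : ℂ => w ^ 2 - (c : ℂ))^[m] w).im = 0 →
      -(c : ℝ) ≤ ((fun w : ℂ => w ^ 2 - (c : ℂ))^[m] w).re →
      ((fun w : ℂ => w ^ 2 - (c : ℂ))^[m] w).re ≤ (c : ℝ) →
      w.im = 0 ∧ -(c : ℝ) ≤ w.re ∧ w.re ≤ (c : ℝ) := by
    intro m
    induction m with
    | zero => intro w h1 h2 h3; exact ⟨h1, h2, h3⟩
    | succ m ih =>
        intro w h1 h2 h3
        rw [Function.iterate_succ_apply] at h1 h2 h3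
        have := ih _ h1 h2 h3
        exact step_real c hc w this.1 this.2.1 this.2.2
  apply key n z <;> rw [hz]
  · simp
  · have : -(c : ℝ) < (ε : ℝ) := by exact_mod_cast hε₁
    simp only [Complex.ratCast_re]
    linarith
  · have : (ε : ℝ) < (c : ℝ) := by exact_mod_cast hε₂
    simp only [Complex.ratCast_re]
    linarith
end
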